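/- arXiv:1809.09819 — 5 statements merged into one kernel-verified Lean document; each statement's English description precedes it below -/
import Mathlib

section
/- Let f : {-1,1}^n → {-1,1} be a Boolean function, let ε ∈ [0,1), and let p : {-1,1}^n → ℝ be any multilinear polynomial satisfying |f(x) − p(x)| ≤ ε for every x ∈ {-1,1}^n. Then max_{S ⊆ [n]} |f̂(S)| ≥ (1−ε) / (Σ_{S ⊆ [n]} |p̂(S)|). Consequently, the Fourier min-entropy satisfies H_∞(f̂²) ≤ 2·log₂( (Σ_S |p̂(S)|) / (1−ε) ). -/
/-!
Since `f` is `±1`-valued and `|f - p| ≤ ε`, we have `f x * p x ≥ 1 - ε` pointwise, so by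
Plancherel `1 - ε ≤ E[f p] = Σ_S f̂(S) p̂(S) ≤ (max_S |f̂(S)|) · Σ_S |p̂(S)|`. A coefficient
attaining the maximum then has `f̂(S)² ≥ ((1 - ε) / Σ_S |p̂(S)|)²`, which bounds the min-entropy.
-/

open Finset

/-- The real value (`1` or `-1`) encoded by a Boolean. -/
noncomputable def bsgn (b : Bool) : ℝ := if b then 1 else -1

/-- The character `χ_S(x) = ∏_{i ∈ S} x_i` on the hypercube `{-1,1}^n`. -/
noncomputable def chi {n : ℕ} (S : Finset (Fin n)) (x : Fin n → Bool) : ℝ :=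
  ∏ i ∈ S, bsgn (x i)

/-- The Fourier coefficient `f̂(S) = E_x [f(x)·χ_S(x)]`. -/
noncomputable def fCoeff {n : ℕ} (f : (Fin n → Bool) → ℝ) (S : Finset (Fin n)) : ℝ :=
  (∑ x : Fin n → Bool, f x * chi S x) / 2 ^ n

/-- The Fourier (Shannon) entropy `H(f̂²) = Σ_S f̂(S)² log₂(1/f̂(S)²)`. -/
noncomputable def fEntropy {n : ℕ} (f : (Fin n → Bool) → ℝ) : ℝ :=
  ∑ S : Finset (Fin n), (fCoeff f S) ^ 2 * Real.logb 2 (1 / (fCoeff f S) ^ 2)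

/-- The Fourier min-entropy `H_∞(f̂²) = min_{S : f̂(S) ≠ 0} log₂(1/f̂(S)²)`. -/
noncomputable def fMinEntropy {n : ℕ} (f : (Fin n → Bool) → ℝ) : ℝ :=
  sInf {y : ℝ | ∃ S : Finset (Fin n),
    fCoeff f S ≠ 0 ∧ y = Real.logb 2 (1 / (fCoeff f S) ^ 2)}

/-- The total influence `Inf(f) = Σ_S |S|·f̂(S)²`. -/
noncomputable def totalInf {n : ℕ} (f : (Fin n → Bool) → ℝ) : ℝ :=
  ∑ S : Finset (Fin n), (S.card : ℝ) * (fCoeff f S) ^ 2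

/-- `f` is a Boolean (`±1`-valued) function. -/
def IsBooleanFunc {n : ℕ} (f : (Fin n → Bool) → ℝ) : Prop := ∀ x, f x = 1 ∨ f x = -1

lemma bsgn_mul_bsgn_add_one (a b : Bool) : bsgn a * bsgn b + 1 = if a = b then 2 else 0 := by
  cases a <;> cases b <;> norm_num [bsgn]

theorem sum_chi_mul_chi {n : ℕ} (x y : Fin n → Bool) :
    ∑ S : Finset (Fin n), chi S x * chi S y = if x = y then (2 : ℝ) ^ n else 0 := by
  simp_rw [chi, ← prod_mul_distrib]
  rw [← powerset_univ, ← prod_add_one]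
  simp_rw [bsgn_mul_bsgn_add_one]
  split_ifs with hxy
  · simp [hxy]
  · obtain ⟨i, hi⟩ := Function.ne_iff.mp hxy
    exact prod_eq_zero (mem_univ i) (if_neg hi)

theorem sum_fCoeff_mul_fCoeff {n : ℕ} (f g : (Fin n → Bool) → ℝ) :
    ∑ S : Finset (Fin n), fCoeff f S * fCoeff g S = (∑ x, f x * g x) / 2 ^ n := by
  have hpos : (0 : ℝ) < 2 ^ n := by positivity
  calc ∑ S : Finset (Fin n), fCoeff f S * fCoeff g S
      = (∑ x, ∑ y, f x * g y * ∑ S : Finset (Fin n), chi S x * chi S y) / (2 ^ n * 2 ^ n) := by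
        simp_rw [fCoeff, div_mul_div_comm, ← sum_div, sum_mul_sum, mul_sum]
        rw [sum_comm]
        refine congrArg (· / _) (sum_congr rfl fun x _ => ?_)
        rw [sum_comm]
        exact sum_congr rfl fun y _ => sum_congr rfl fun S _ => by ring
    _ = (∑ x, f x * g x) / 2 ^ n := by
        simp_rw [sum_chi_mul_chi, mul_ite, mul_zero, sum_ite_eq, mem_univ, if_true, ← sum_mul]
        field_simp

lemma one_sub_le_mul_of_abs_sub_le {a b ε : ℝ} (ha : a = 1 ∨ a = -1) (h : |a - b| ≤ ε) :
    1 - ε ≤ a * b := by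
  rcases ha with rfl | rfl <;> linarith [abs_le.mp h]

theorem one_sub_le_sum_fCoeff_mul {n : ℕ} {f p : (Fin n → Bool) → ℝ} (hf : IsBooleanFunc f)
    {ε : ℝ} (happrox : ∀ x, |f x - p x| ≤ ε) :
    1 - ε ≤ ∑ S : Finset (Fin n), fCoeff f S * fCoeff p S := by
  rw [sum_fCoeff_mul_fCoeff, le_div_iff₀ (by positivity)]
  calc (1 - ε) * 2 ^ n = ∑ _x : Fin n → Bool, (1 - ε) := by simp; ring
    _ ≤ ∑ x, f x * p x := sum_le_sum fun x _ => one_sub_le_mul_of_abs_sub_le (hf x) (happrox x)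

theorem sum_mul_le_sup'_abs_mul_sum_abs {ι : Type*} [Fintype ι] [Nonempty ι] (a b : ι → ℝ) :
    ∑ i, a i * b i ≤ univ.sup' univ_nonempty (fun i => |a i|) * ∑ i, |b i| := by
  rw [mul_sum]
  refine sum_le_sum fun i _ => ?_
  calc a i * b i ≤ |a i| * |b i| := abs_mul (a i) (b i) ▸ le_abs_self _
    _ ≤ _ := mul_le_mul_of_nonneg_right (le_sup' (fun i => |a i|) (mem_univ i)) (abs_nonneg _)

theorem fMinEntropy_le_logb {n : ℕ} (f : (Fin n → Bool) → ℝ) {S : Finset (Fin n)}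
    (hS : fCoeff f S ≠ 0) : fMinEntropy f ≤ Real.logb 2 (1 / fCoeff f S ^ 2) := by
  refine csInf_le (Set.Finite.bddBelow ?_) ⟨S, hS, rfl⟩
  refine (Set.finite_range fun S => Real.logb 2 (1 / fCoeff f S ^ 2)).subset ?_
  rintro _ ⟨S, -, rfl⟩
  exact ⟨S, rfl⟩

theorem fMinEntropy_le_of_le_abs_fCoeff {n : ℕ} {f : (Fin n → Bool) → ℝ} {S : Finset (Fin n)}
    {c : ℝ} (hc : 0 < c) (h : c ≤ |fCoeff f S|) : fMinEntropy f ≤ 2 * Real.logb 2 (1 / c) := by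
  have hS : 0 < |fCoeff f S| := hc.trans_le h
  calc fMinEntropy f ≤ Real.logb 2 (1 / fCoeff f S ^ 2) := fMinEntropy_le_logb f (abs_pos.mp hS)
    _ = 2 * Real.logb 2 (1 / |fCoeff f S|) := by
        rw [← sq_abs, ← one_div_pow, Real.logb_pow]; push_cast; rfl
    _ ≤ 2 * Real.logb 2 (1 / c) := by gcongr; norm_num

theorem stmt0_general {n : ℕ} (f p : (Fin n → Bool) → ℝ) (hf : IsBooleanFunc f)
    (ε : ℝ) (hε1 : ε < 1)
    (happrox : ∀ x, |f x - p x| ≤ ε) :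
    (1 - ε) / (∑ S : Finset (Fin n), |fCoeff p S|) ≤
      Finset.univ.sup' Finset.univ_nonempty (fun S : Finset (Fin n) => |fCoeff f S|) ∧
    fMinEntropy f ≤
      2 * Real.logb 2 ((∑ S : Finset (Fin n), |fCoeff p S|) / (1 - ε)) := by
  set A := ∑ S : Finset (Fin n), |fCoeff p S|
  obtain ⟨S₀, -, hS₀⟩ := exists_mem_eq_sup' univ_nonempty fun S : Finset (Fin n) => |fCoeff f S|
  rw [hS₀]
  have hkey : 1 - ε ≤ |fCoeff f S₀| * A := by
    rw [← hS₀]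
    exact (one_sub_le_sum_fCoeff_mul hf happrox).trans (sum_mul_le_sup'_abs_mul_sum_abs _ _)
  have hε : 0 < 1 - ε := sub_pos.2 hε1
  have hA : 0 < A := pos_of_mul_pos_right (hε.trans_le hkey) (abs_nonneg _)
  have hbound : (1 - ε) / A ≤ |fCoeff f S₀| := (div_le_iff₀ hA).2 hkey
  refine ⟨hbound, ?_⟩
  rw [← one_div_div]
  exact fMinEntropy_le_of_le_abs_fCoeff (div_pos hε hA) hbound

/-- If `p` is a multilinear polynomial (equivalently, an arbitrary real
function on the hypercube, with its unique Fourier expansion) that `ε`-approximates a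
Boolean function `f` pointwise, with `ε ∈ [0,1)`, then
`max_S |f̂(S)| ≥ (1-ε) / Σ_S |p̂(S)|`, and consequently
`H_∞(f̂²) ≤ 2 log₂( (Σ_S |p̂(S)|) / (1-ε) )`. -/
theorem stmt0 {n : ℕ} (f p : (Fin n → Bool) → ℝ) (hf : IsBooleanFunc f)
    (ε : ℝ) (hε0 : 0 ≤ ε) (hε1 : ε < 1)
    (happrox : ∀ x, |f x - p x| ≤ ε) :
    (1 - ε) / (∑ S : Finset (Fin n), |fCoeff p S|) ≤
      Finset.univ.sup' Finset.univ_nonempty (fun S : Finset (Fin n) => |fCoeff f S|) ∧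
    fMinEntropy f ≤
      2 * Real.logb 2 ((∑ S : Finset (Fin n), |fCoeff p S|) / (1 - ε)) :=
  stmt0_general f p hf ε hε1 happrox
end

section
/- Let f : {-1,1}^n → {-1,1} be a Boolean function. Suppose v₁, …, v_k ∈ 𝔽₂ⁿ are linearly independent vectors, b₁, …, b_k ∈ {-1,1}, and let H = { x ∈ {-1,1}^n : ∏_{i ∈ supp(v_j)} x_i = b_j for every j ∈ [k] } (an affine subspace of co-dimension k). If f is constant on H, then there exists T ⊆ [n] such that |f̂(T)| ≥ 2^{−k}. In particular, the Fourier min-entropy satisfies H_∞(f̂²) ≤ 2·C_min^⊕(f), where C_min^⊕(f) is the minimum over x ∈ {-1,1}^n of the smallest co-dimension of an 𝔽₂-affine subspace containing x on which f is constant. -/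
open Finset

lemma bsgn_sq (c : Bool) : bsgn c * bsgn c = 1 := by cases c <;> norm_num [bsgn]
lemma bsgn_abs (c : Bool) : |bsgn c| = 1 := by cases c <;> norm_num [bsgn]
lemma bsgn_not (c : Bool) : bsgn (!c) = - bsgn c := by cases c <;> norm_num [bsgn]
lemma bsgn_or (c : Bool) : bsgn c = 1 ∨ bsgn c = -1 := by cases c <;> simp [bsgn]

lemma zmod2_cases (a : ZMod 2) : a = 0 ∨ a = 1 := by revert a; decide

noncomputable def chiZ {n : ℕ} (w : Fin n → ZMod 2) (x : Fin n → Bool) : ℝ :=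
  ∏ i : Fin n, bsgn (x i) ^ (w i).val

lemma chi_filter_eq_chiZ {n : ℕ} (w : Fin n → ZMod 2) (x : Fin n → Bool) :
    chi (Finset.univ.filter (fun i => w i = 1)) x = chiZ w x := by
  rw [chi, chiZ, Finset.prod_filter]
  refine Finset.prod_congr rfl fun i _ => ?_
  rcases zmod2_cases (w i) with h | h <;> simp [h]
  rw [show ((1:ZMod 2)).val = 1 from rfl, pow_one]

lemma chiZ_add {n : ℕ} (v w : Fin n → ZMod 2) (x : Fin n → Bool) :
    chiZ (v + w) x = chiZ v x * chiZ w x := by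
  rw [chiZ, chiZ, chiZ, ← Finset.prod_mul_distrib]
  refine Finset.prod_congr rfl fun i _ => ?_
  have hs := bsgn_sq (x i)
  rcases zmod2_cases (v i) with h1 | h1 <;> rcases zmod2_cases (w i) with h2 | h2 <;>
    simp only [Pi.add_apply, h1, h2, add_zero, zero_add,
      show ((0:ZMod 2)).val = 0 from rfl, show ((1:ZMod 2)).val = 1 from rfl,
      show ((1+1:ZMod 2)).val = 0 from rfl, pow_zero, pow_one, one_mul, mul_one]
  rw [hs]

lemma chiZ_finsum {n k : ℕ} (v : Fin k → (Fin n → ZMod 2)) (S : Finset (Fin k))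
    (x : Fin n → Bool) :
    chiZ (∑ j ∈ S, v j) x = ∏ j ∈ S, chiZ (v j) x := by
  induction S using Finset.cons_induction with
  | empty => simp [chiZ]
  | cons a s ha ih => rw [Finset.sum_cons, Finset.prod_cons, chiZ_add, ih]

lemma chiZ_mul_self {n : ℕ} (w : Fin n → ZMod 2) (x : Fin n → Bool) :
    chiZ w x * chiZ w x = 1 := by
  rw [chiZ, ← Finset.prod_mul_distrib]
  refine Finset.prod_eq_one fun i _ => ?_
  rw [← mul_pow, bsgn_sq, one_pow]

lemma chiZ_or {n : ℕ} (w : Fin n → ZMod 2) (x : Fin n → Bool) :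
    chiZ w x = 1 ∨ chiZ w x = -1 :=
  mul_self_eq_one_iff.mp (chiZ_mul_self w x)

lemma chiZ_abs {n : ℕ} (w : Fin n → ZMod 2) (x : Fin n → Bool) : |chiZ w x| = 1 := by
  rcases chiZ_or w x with h | h <;> rw [h] <;> norm_num

lemma sum_chiZ_eq_zero {n : ℕ} (w : Fin n → ZMod 2) (hw : w ≠ 0) :
    ∑ x : Fin n → Bool, chiZ w x = 0 := by
  obtain ⟨i₀, hi₀⟩ : ∃ i, w i = 1 := by
    by_contra h; push_neg at h
    exact hw (funext fun i => (zmod2_cases (w i)).resolve_right (h i))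
  have h1 : ∀ y : Fin n → Bool,
      chiZ w y = bsgn (y i₀) * ∏ i ∈ Finset.univ.erase i₀, bsgn (y i) ^ (w i).val := by
    intro y
    rw [chiZ, ← Finset.mul_prod_erase Finset.univ _ (Finset.mem_univ i₀), hi₀,
      show ((1:ZMod 2)).val = 1 from rfl, pow_one]
  have key : ∀ x : Fin n → Bool, chiZ w (Function.update x i₀ (!x i₀)) = - chiZ w x := by
    intro x
    rw [h1, h1, Function.update_self, bsgn_not, neg_mul]
    congr 2
    refine Finset.prod_congr rfl fun i hi => ?_
    rw [Function.update_of_ne (Finset.ne_of_mem_erase hi)]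
  refine Finset.sum_involution (fun x _ => Function.update x i₀ (!x i₀)) ?_ ?_ (fun _ _ => Finset.mem_univ _) ?_
  · intro x _; rw [key]; ring
  · intro x _ _ hupd
    have := congrFun hupd i₀
    simp at this
  · intro x _
    simp [Function.update_self]

lemma one_add_mul_eq_zero {a c : ℝ} (ha : a = 1 ∨ a = -1) (hc : c = 1 ∨ c = -1)
    (h : a ≠ c) : 1 + c * a = 0 := by
  rcases ha with rfl | rfl <;> rcases hc with rfl | rfl <;> simp_all

/-- If `f` is constant on an 𝔽₂-affine subspace
`H = {x : ∏_{i ∈ supp(v_j)} x_i = b_j, j ∈ [k]}` given by `k` linearly independent parity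
constraints, then some Fourier coefficient satisfies `|f̂(T)| ≥ 2^{-k}`; in particular
(taking the minimum-codimension such subspace through any point, i.e. `C_min^⊕(f) ≤ k`),
the Fourier min-entropy satisfies `H_∞(f̂²) ≤ 2k`. -/
theorem stmt1 {n k : ℕ} (f : (Fin n → Bool) → ℝ) (hf : IsBooleanFunc f)
    (v : Fin k → (Fin n → ZMod 2)) (hv : LinearIndependent (ZMod 2) v)
    (b : Fin k → Bool)
    (hconst : ∀ x y : Fin n → Bool,
      (∀ j, ∏ i ∈ Finset.univ.filter (fun i => v j i = 1), bsgn (x i) = bsgn (b j)) →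
      (∀ j, ∏ i ∈ Finset.univ.filter (fun i => v j i = 1), bsgn (y i) = bsgn (b j)) →
      f x = f y) :
    (∃ T : Finset (Fin n), (2 : ℝ) ^ (-(k : ℤ)) ≤ |fCoeff f T|) ∧
    fMinEntropy f ≤ 2 * k := by
  classical
  set W : Finset (Fin k) → (Fin n → ZMod 2) := fun S => ∑ j ∈ S, v j with hWdef
  set F : (Fin n → Bool) → ℝ :=
    fun x => ∏ j : Fin k, (1 + bsgn (b j) * chiZ (v j) x) with hFdef
  set H : Finset (Fin n → Bool) :=
    Finset.univ.filter (fun x => ∀ j, chiZ (v j) x = bsgn (b j)) with hHdef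
  have h2n : (0:ℝ) < 2 ^ n := by positivity
  have h2k : (0:ℝ) < 2 ^ k := by positivity
  -- expansion of the product
  have hprod : ∀ x : Fin n → Bool,
      F x = ∑ S : Finset (Fin k), (∏ j ∈ S, bsgn (b j)) * chiZ (W S) x := by
    intro x
    calc F x = ∏ j : Fin k, (bsgn (b j) * chiZ (v j) x + 1) :=
          Finset.prod_congr rfl fun j _ => by ring
      _ = ∑ S ∈ (Finset.univ : Finset (Fin k)).powerset,
            (∏ j ∈ S, bsgn (b j) * chiZ (v j) x) * ∏ j ∈ Finset.univ \ S, (1:ℝ) :=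
          Finset.prod_add _ _ _
      _ = ∑ S : Finset (Fin k), (∏ j ∈ S, bsgn (b j)) * chiZ (W S) x := by
          rw [Finset.powerset_univ]
          refine Finset.sum_congr rfl fun S _ => ?_
          rw [Finset.prod_const_one, mul_one, Finset.prod_mul_distrib, hWdef,
            chiZ_finsum]
  -- pointwise value of the product
  have hP : ∀ x : Fin n → Bool,
      F x = if (∀ j, chiZ (v j) x = bsgn (b j)) then (2:ℝ)^k else 0 := by
    intro x
    by_cases h : ∀ j, chiZ (v j) x = bsgn (b j)
    · rw [if_pos h]
      show ∏ j : Fin k, (1 + bsgn (b j) * chiZ (v j) x) = (2:ℝ)^k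
      have he : ∀ j : Fin k, j ∈ Finset.univ →
          (1 + bsgn (b j) * chiZ (v j) x) = 2 := by
        intro j _; rw [h j, bsgn_sq]; norm_num
      rw [Finset.prod_congr rfl he, Finset.prod_const]
      simp
    · rw [if_neg h]
      push_neg at h
      obtain ⟨j, hj⟩ := h
      exact Finset.prod_eq_zero (Finset.mem_univ j)
        (one_add_mul_eq_zero (chiZ_or (v j) x) (bsgn_or (b j)) hj)
  -- W S = 0 iff S = ∅
  have hW0 : ∀ S : Finset (Fin k), W S = 0 ↔ S = ∅ := by
    intro S
    constructor
    · intro h0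
      by_contra hS
      have hsum : ∑ j : Fin k, (if j ∈ S then (1:ZMod 2) else 0) • v j = 0 := by
        rw [← h0, hWdef]
        simp only [ite_smul, one_smul, zero_smul]
        rw [Finset.sum_ite_mem, Finset.univ_inter]
      have hg := Fintype.linearIndependent_iff.mp hv
        (fun j => if j ∈ S then 1 else 0) hsum
      obtain ⟨j, hj⟩ := Finset.nonempty_iff_ne_empty.mpr hS
      have := hg j
      simp only [hj, if_true] at this
      exact one_ne_zero this
    · rintro rfl; simp [hWdef]
  -- orthogonality
  have horth : ∀ S : Finset (Fin k),
      ∑ x : Fin n → Bool, chiZ (W S) x = if S = ∅ then (2:ℝ)^n else 0 := by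
    intro S
    by_cases hS : S = ∅
    · subst hS
      rw [if_pos rfl]
      have hz : W (∅ : Finset (Fin k)) = 0 := by simp [hWdef]
      rw [hz]
      have hone : ∀ x : Fin n → Bool, chiZ (0 : Fin n → ZMod 2) x = 1 := by
        intro x; simp [chiZ, show ((0:ZMod 2)).val = 0 from rfl]
      rw [Finset.sum_congr rfl fun x _ => hone x, Finset.sum_const]
      simp [Finset.card_univ]
    · rw [if_neg hS]
      exact sum_chiZ_eq_zero _ (fun h0 => hS ((hW0 S).mp h0))
  -- two evaluations of ∑ g·F
  have hsum_indic : ∀ g : (Fin n → Bool) → ℝ,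
      ∑ x : Fin n → Bool, g x * F x = (2:ℝ)^k * ∑ x ∈ H, g x := by
    intro g
    calc ∑ x : Fin n → Bool, g x * F x
        = ∑ x : Fin n → Bool,
            (if (∀ j, chiZ (v j) x = bsgn (b j)) then g x * 2^k else 0) := by
          refine Finset.sum_congr rfl fun x _ => ?_
          rw [hP x]; split_ifs <;> simp
      _ = ∑ x ∈ H, g x * 2^k := (Finset.sum_filter _ _).symm
      _ = (2:ℝ)^k * ∑ x ∈ H, g x := by rw [← Finset.sum_mul]; ring
  have hsum_exp : ∀ g : (Fin n → Bool) → ℝ,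
      ∑ x : Fin n → Bool, g x * F x
        = ∑ S : Finset (Fin k), (∏ j ∈ S, bsgn (b j)) *
            ∑ x : Fin n → Bool, g x * chiZ (W S) x := by
    intro g
    calc ∑ x : Fin n → Bool, g x * F x
        = ∑ x : Fin n → Bool, ∑ S : Finset (Fin k),
            g x * ((∏ j ∈ S, bsgn (b j)) * chiZ (W S) x) := by
          refine Finset.sum_congr rfl fun x _ => ?_
          rw [hprod x, Finset.mul_sum]
      _ = ∑ S : Finset (Fin k), ∑ x : Fin n → Bool,
            g x * ((∏ j ∈ S, bsgn (b j)) * chiZ (W S) x) := Finset.sum_comm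
      _ = _ := by
          refine Finset.sum_congr rfl fun S _ => ?_
          rw [Finset.mul_sum]
          exact Finset.sum_congr rfl fun x _ => by ring
  -- cardinality of H
  have hHcard : (2:ℝ)^k * (H.card : ℝ) = 2^n := by
    have h1 := hsum_indic (fun _ => 1)
    have h2 := hsum_exp (fun _ => 1)
    simp only [one_mul] at h1 h2
    rw [Finset.sum_const, nsmul_eq_mul, mul_one] at h1
    rw [h1] at h2
    rw [h2]
    simp only [horth, mul_ite, mul_zero]
    rw [Finset.sum_ite_eq' Finset.univ (∅ : Finset (Fin k))]
    simp
  have hHne : H.Nonempty := by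
    rw [Finset.nonempty_iff_ne_empty]
    intro h
    rw [h] at hHcard
    simp at hHcard
    exact absurd hHcard.symm (by positivity)
  obtain ⟨x₀, hx₀⟩ := hHne
  have hx₀' : ∀ j, chiZ (v j) x₀ = bsgn (b j) := (Finset.mem_filter.mp hx₀).2
  have hconst' : ∀ x ∈ H, f x = f x₀ := by
    intro x hx
    refine hconst x x₀ ?_ ?_
    · intro j
      exact (chi_filter_eq_chiZ (v j) x).trans ((Finset.mem_filter.mp hx).2 j)
    · intro j
      exact (chi_filter_eq_chiZ (v j) x₀).trans (hx₀' j)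
  -- main identity
  have hco : ∀ S : Finset (Fin k),
      ∑ x : Fin n → Bool, f x * chiZ (W S) x
        = 2^n * fCoeff f (Finset.univ.filter (fun i => W S i = 1)) := by
    intro S
    rw [fCoeff, mul_div_cancel₀ _ (ne_of_gt h2n)]
    exact Finset.sum_congr rfl fun x _ => by rw [chi_filter_eq_chiZ]
  have hmain : f x₀ * 2^n
      = ∑ S : Finset (Fin k), (∏ j ∈ S, bsgn (b j)) *
          (2^n * fCoeff f (Finset.univ.filter (fun i => W S i = 1))) := by
    have h1 := hsum_indic f
    have h2 := hsum_exp f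
    have hsf : ∑ x ∈ H, f x = (H.card : ℝ) * f x₀ := by
      rw [Finset.sum_congr rfl hconst', Finset.sum_const, nsmul_eq_mul]
    rw [hsf] at h1
    calc f x₀ * 2^n = 2^k * ((H.card : ℝ) * f x₀) := by
          rw [← hHcard]; ring
      _ = ∑ x : Fin n → Bool, f x * F x := h1.symm
      _ = _ := by
          rw [h2]
          exact Finset.sum_congr rfl fun S _ => by rw [hco S]
  -- existence of a large coefficient
  have hTex : ∃ T : Finset (Fin n), (2 : ℝ) ^ (-(k : ℤ)) ≤ |fCoeff f T| := by
    by_contra hcon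
    push_neg at hcon
    have habs : |f x₀| = 1 := by rcases hf x₀ with h | h <;> rw [h] <;> norm_num
    have hlhs : |f x₀ * 2^n| = 2^n := by
      rw [abs_mul, habs, one_mul, abs_of_pos h2n]
    have hb1 : ∀ S : Finset (Fin k), |∏ j ∈ S, bsgn (b j)| = 1 := by
      intro S; rw [Finset.abs_prod]
      exact Finset.prod_eq_one fun j _ => bsgn_abs (b j)
    have hup : |f x₀ * 2^n| < 2^n := by
      rw [hmain]
      calc |∑ S : Finset (Fin k), (∏ j ∈ S, bsgn (b j)) *
              (2^n * fCoeff f (Finset.univ.filter (fun i => W S i = 1)))|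
          ≤ ∑ S : Finset (Fin k), |(∏ j ∈ S, bsgn (b j)) *
              (2^n * fCoeff f (Finset.univ.filter (fun i => W S i = 1)))| :=
            Finset.abs_sum_le_sum_abs _ _
        _ < ∑ _S : Finset (Fin k), (2:ℝ)^n * 2^(-(k:ℤ)) := by
            refine Finset.sum_lt_sum_of_nonempty Finset.univ_nonempty fun S _ => ?_
            rw [abs_mul, hb1, one_mul, abs_mul, abs_of_pos h2n]
            exact mul_lt_mul_of_pos_left (hcon _) h2n
        _ = 2^n := by
            rw [Finset.sum_const, nsmul_eq_mul, Finset.card_univ,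
              Fintype.card_finset, Fintype.card_fin, zpow_neg, zpow_natCast]
            push_cast
            field_simp
    rw [hlhs] at hup
    exact lt_irrefl _ hup
  obtain ⟨T, hT⟩ := hTex
  refine ⟨⟨T, hT⟩, ?_⟩
  -- min-entropy bound
  have hpos : (0:ℝ) < (2:ℝ)^(-(k:ℤ)) := by positivity
  have hne0 : fCoeff f T ≠ 0 := by
    intro h; rw [h, abs_zero] at hT; linarith
  have hcle : ∀ S : Finset (Fin n), |fCoeff f S| ≤ 1 := by
    intro S
    rw [fCoeff, abs_div, abs_of_pos h2n, div_le_one h2n]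
    calc |∑ x : Fin n → Bool, f x * chi S x|
        ≤ ∑ x : Fin n → Bool, |f x * chi S x| := Finset.abs_sum_le_sum_abs _ _
      _ = ∑ _x : Fin n → Bool, (1:ℝ) := by
          refine Finset.sum_congr rfl fun x _ => ?_
          have h1 : |f x| = 1 := by rcases hf x with h | h <;> rw [h] <;> norm_num
          have h2 : |chi S x| = 1 := by
            rw [chi, Finset.abs_prod]
            exact Finset.prod_eq_one fun i _ => bsgn_abs _
          rw [abs_mul, h1, h2, one_mul]
      _ = 2^n := by
          rw [Finset.sum_const, nsmul_eq_mul, mul_one, Finset.card_univ]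
          simp
  have hsqpos : ∀ S : Finset (Fin n), fCoeff f S ≠ 0 → (0:ℝ) < (fCoeff f S)^2 :=
    fun S hS => lt_of_le_of_ne (sq_nonneg _) (Ne.symm (pow_ne_zero 2 hS))
  have hbdd : BddBelow {y : ℝ | ∃ S : Finset (Fin n),
      fCoeff f S ≠ 0 ∧ y = Real.logb 2 (1 / (fCoeff f S) ^ 2)} := by
    refine ⟨0, fun y hy => ?_⟩
    obtain ⟨S, hS0, rfl⟩ := hy
    apply Real.logb_nonneg one_lt_two
    rw [le_div_iff₀ (hsqpos S hS0), one_mul]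
    have h1 := hcle S
    nlinarith [abs_nonneg (fCoeff f S), sq_abs (fCoeff f S)]
  have hmem : Real.logb 2 (1 / (fCoeff f T) ^ 2) ∈ {y : ℝ | ∃ S : Finset (Fin n),
      fCoeff f S ≠ 0 ∧ y = Real.logb 2 (1 / (fCoeff f S) ^ 2)} := ⟨T, hne0, rfl⟩
  refine le_trans (csInf_le hbdd hmem) ?_
  have hsq : (2:ℝ)^(-(k:ℤ)) * 2^(-(k:ℤ)) ≤ (fCoeff f T)^2 := by
    calc (2:ℝ)^(-(k:ℤ)) * 2^(-(k:ℤ)) ≤ |fCoeff f T| * |fCoeff f T| :=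
          mul_le_mul hT hT (le_of_lt hpos) (abs_nonneg _)
      _ = (fCoeff f T)^2 := by rw [← abs_mul, abs_mul_self, sq]
  have harg : 1 / (fCoeff f T)^2 ≤ (2:ℝ)^(2*k) := by
    rw [div_le_iff₀ (hsqpos T hne0)]
    calc (1:ℝ) = 2^(2*k) * (2^(-(k:ℤ)) * 2^(-(k:ℤ))) := by
          rw [zpow_neg, zpow_natCast, two_mul, pow_add]
          field_simp
      _ ≤ 2^(2*k) * (fCoeff f T)^2 := by
          exact mul_le_mul_of_nonneg_left hsq (by positivity)
  calc Real.logb 2 (1 / (fCoeff f T)^2) ≤ Real.logb 2 ((2:ℝ)^(2*k)) :=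
        Real.logb_le_logb_of_le one_lt_two (by positivity) harg
    _ = 2 * k := by
        rw [Real.logb_pow, Real.logb_self_eq_one one_lt_two]
        push_cast; ring
end

section
/- Let f : {-1,1}^n → {-1,1} and let 𝒞 = {C₁, …, C_t} be an unambiguous ⊕-certificate for f, i.e. a partition of {-1,1}^n into 𝔽₂-affine subspaces such that f is constant on each C_i, where C_i has co-dimension c_i. Then the Fourier entropy satisfies H(f̂²) ≤ 2·Σ_{i=1}^{t} 2^{−c_i}·c_i = 2·aUC^⊕(f,𝒞). In particular, H(f̂²) ≤ 2·aUC^⊕(f), where aUC^⊕(f) is the minimum of aUC^⊕(f,𝒞) over all unambiguous ⊕-certificates 𝒞 for f. -/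
open Finset

/-!
Let `G_i` be the indicator of the `i`-th part. Expanding `G_i = ∏_j (1 + b_ij χ_{v_ij}) / 2`
and using that the `v_ij` are independent, `Ĝ_i` is supported on the `2^{c_i}` characters of
their span, where `Ĝ_i(S)² = 4^{-c_i}`. Since `f = Σ_i ε_i G_i` with `ε_i = ±1`, every `S` in
the Fourier support of `f` is seen by some `Ĝ_i`, and `q(S) = Σ_i Ĝ_i(S)²` has the same total
mass `Σ_i 2^{-c_i}` as `f̂²`. Gibbs' inequality then gives
`H(f̂²) ≤ Σ_S f̂(S)² log₂(1/q(S)) ≤ 2 Σ_S f̂(S)² M(S)`, where `M(S)` is the least `c_i` with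
`Ĝ_i(S) ≠ 0`. Finally, when `M(S) > k` the coefficient `f̂(S)` is also the coefficient of `f`
restricted to the parts of co-dimension `> k`, whose squared norm is `Σ_{c_i > k} 2^{-c_i}`;
summing over `k` yields `Σ_S f̂(S)² M(S) ≤ Σ_i c_i 2^{-c_i}`.
-/

section Fourier

variable {n : ℕ}

lemma bsgn_mul_self (a : Bool) : bsgn a * bsgn a = 1 := by
  cases a <;> norm_num [bsgn]

lemma chi_eq_prod_ite (S : Finset (Fin n)) (x : Fin n → Bool) :
    chi S x = ∏ i, if i ∈ S then bsgn (x i) else 1 := by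
  rw [prod_ite_mem, univ_inter, chi]

lemma chi_mul_chi (S T : Finset (Fin n)) (x : Fin n → Bool) :
    chi S x * chi T x = chi (symmDiff S T) x := by
  simp only [chi_eq_prod_ite, ← prod_mul_distrib]
  refine prod_congr rfl fun i _ => ?_
  by_cases hS : i ∈ S <;> by_cases hT : i ∈ T <;> simp [hS, hT, mem_symmDiff, bsgn_mul_self]

lemma chi_mul_self (S : Finset (Fin n)) (x : Fin n → Bool) : chi S x * chi S x = 1 := by
  rw [chi_mul_chi, symmDiff_self, Finset.bot_eq_empty, chi, prod_empty]

lemma sum_chi (S : Finset (Fin n)) :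
    ∑ x, chi S x = if S = ∅ then (2 : ℝ) ^ n else 0 := by
  classical
  simp only [chi_eq_prod_ite]
  rw [← Fintype.prod_sum (fun i (a : Bool) => if i ∈ S then bsgn a else 1)]
  split_ifs with hS
  · simp [hS]
  · obtain ⟨i, hi⟩ := nonempty_iff_ne_empty.2 hS
    exact prod_eq_zero (mem_univ i) (by simp [hi, bsgn])

lemma sum_chi_mul_chi_eq_ite (x y : Fin n → Bool) :
    ∑ S, chi S x * chi S y = if x = y then (2 : ℝ) ^ n else 0 := by
  simp only [chi, ← prod_mul_distrib]
  rw [← powerset_univ, ← prod_one_add]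
  split_ifs with hxy
  · simp [hxy, bsgn_mul_self, one_add_one_eq_two]
  · obtain ⟨i, hi⟩ := Function.ne_iff.1 hxy
    refine prod_eq_zero (mem_univ i) ?_
    cases hx : x i <;> cases hy : y i <;> simp_all [bsgn]

lemma fCoeff_empty (u : (Fin n → Bool) → ℝ) : fCoeff u ∅ = (∑ x, u x) / 2 ^ n := by
  simp [fCoeff, chi]

lemma fCoeff_sum {ι : Type*} (s : Finset ι) (u : ι → (Fin n → Bool) → ℝ) (S : Finset (Fin n)) :
    fCoeff (fun x => ∑ i ∈ s, u i x) S = ∑ i ∈ s, fCoeff (u i) S := by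
  simp only [fCoeff, sum_mul, ← sum_div]
  rw [sum_comm]

lemma fCoeff_const_mul (a : ℝ) (u : (Fin n → Bool) → ℝ) (S : Finset (Fin n)) :
    fCoeff (fun x => a * u x) S = a * fCoeff u S := by
  simp only [fCoeff, mul_assoc, ← mul_sum, mul_div_assoc]

lemma fCoeff_chi (T S : Finset (Fin n)) : fCoeff (chi T) S = if T = S then 1 else 0 := by
  simp only [fCoeff, chi_mul_chi, sum_chi, ← Finset.bot_eq_empty, symmDiff_eq_bot]
  split_ifs <;> simp

theorem sum_fCoeff_sq (u : (Fin n → Bool) → ℝ) :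
    ∑ S, fCoeff u S ^ 2 = fCoeff (fun x => u x ^ 2) ∅ := by
  have h2n : (2 : ℝ) ^ n ≠ 0 := by positivity
  have expand : ∀ S, fCoeff u S ^ 2
      = (∑ x, ∑ y, u x * u y * (chi S x * chi S y)) / (2 ^ n) ^ 2 := fun S => by
    rw [fCoeff, div_pow, sq, sum_mul_sum]
    congr 1
    exact sum_congr rfl fun x _ => sum_congr rfl fun y _ => by ring
  simp only [expand, ← sum_div, fCoeff_empty]
  rw [sum_comm]
  simp_rw [sum_comm (s := univ (α := Finset (Fin n))), ← mul_sum, sum_chi_mul_chi_eq_ite,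
    mul_ite, mul_zero, sum_ite_eq, mem_univ, if_true, ← sum_mul]
  field_simp

end Fourier

section Parity

variable {n c : ℕ}

def oneSupport (w : Fin n → ZMod 2) : Finset (Fin n) := univ.filter fun l => w l = 1

lemma oneSupport_add (w w' : Fin n → ZMod 2) :
    oneSupport (w + w') = symmDiff (oneSupport w) (oneSupport w') := by
  ext l
  simp only [oneSupport, mem_symmDiff, mem_filter, mem_univ, true_and, Pi.add_apply]
  generalize w l = a
  generalize w' l = a'
  revert a a'
  decide

lemma oneSupport_injective : Function.Injective (oneSupport (n := n)) := by
  intro w w' h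
  funext l
  have hl : l ∈ oneSupport w ↔ l ∈ oneSupport w' := by rw [h]
  simp only [oneSupport, mem_filter, mem_univ, true_and] at hl
  generalize w l = a at hl
  generalize w' l = a' at hl
  revert a a'
  decide

lemma chi_oneSupport_sum (v : Fin c → Fin n → ZMod 2) (T : Finset (Fin c)) (x : Fin n → Bool) :
    chi (oneSupport (∑ j ∈ T, v j)) x = ∏ j ∈ T, chi (oneSupport (v j)) x := by
  classical
  induction T using Finset.induction_on with
  | empty => simp [oneSupport, chi]
  | insert j T hj ih => rw [sum_insert hj, prod_insert hj, oneSupport_add, ← chi_mul_chi, ih]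

lemma LinearIndependent.injective_sum {R M κ : Type*} [Semiring R] [Nontrivial R]
    [AddCommMonoid M] [Module R M] [Fintype κ] {v : κ → M} (hv : LinearIndependent R v) :
    Function.Injective fun T : Finset κ => ∑ j ∈ T, v j := by
  classical
  intro T T' h
  have hcoef := Fintype.linearIndependent_iffₛ.1 hv (fun j => if j ∈ T then 1 else 0)
    (fun j => if j ∈ T' then 1 else 0) (by simpa [ite_smul, sum_ite_mem] using h)
  ext j
  have := hcoef j
  by_cases hj : j ∈ T <;> by_cases hj' : j ∈ T' <;> simp_all

def SatisfiesParities (v : Fin c → Fin n → ZMod 2) (b : Fin c → Bool) (x : Fin n → Bool) :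
    Prop :=
  ∀ j, chi (oneSupport (v j)) x = bsgn (b j)

open Classical in
noncomputable def parityIndicator (v : Fin c → Fin n → ZMod 2) (b : Fin c → Bool)
    (x : Fin n → Bool) : ℝ :=
  if SatisfiesParities v b x then 1 else 0

lemma parityIndicator_of_satisfies {v : Fin c → Fin n → ZMod 2} {b : Fin c → Bool}
    {x : Fin n → Bool} (h : SatisfiesParities v b x) : parityIndicator v b x = 1 :=
  if_pos h

lemma parityIndicator_sq (v : Fin c → Fin n → ZMod 2) (b : Fin c → Bool) (x : Fin n → Bool) :
    parityIndicator v b x ^ 2 = parityIndicator v b x := by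
  unfold parityIndicator
  split_ifs <;> norm_num

lemma parityIndicator_eq_prod (v : Fin c → Fin n → ZMod 2) (b : Fin c → Bool)
    (x : Fin n → Bool) :
    parityIndicator v b x = ∏ j, (1 + bsgn (b j) * chi (oneSupport (v j)) x) / 2 := by
  classical
  have factor : ∀ j, (1 + bsgn (b j) * chi (oneSupport (v j)) x) / 2
      = if chi (oneSupport (v j)) x = bsgn (b j) then 1 else 0 := fun j => by
    rcases mul_self_eq_one_iff.1 (chi_mul_self (oneSupport (v j)) x) with h | h <;>
      cases b j <;> norm_num [h, bsgn]
  simp only [factor, prod_boole, mem_univ, true_implies, parityIndicator, SatisfiesParities]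
  congr

lemma parityIndicator_eq_sum (v : Fin c → Fin n → ZMod 2) (b : Fin c → Bool)
    (x : Fin n → Bool) :
    parityIndicator v b x = (2 : ℝ) ^ (-(c : ℤ)) *
      ∑ T : Finset (Fin c), (∏ j ∈ T, bsgn (b j)) * chi (oneSupport (∑ j ∈ T, v j)) x := by
  rw [parityIndicator_eq_prod, prod_div_distrib, prod_one_add, powerset_univ, prod_const,
    card_univ, Fintype.card_fin, zpow_neg, zpow_natCast, div_eq_inv_mul]
  simp only [prod_mul_distrib, chi_oneSupport_sum]

lemma fCoeff_parityIndicator (v : Fin c → Fin n → ZMod 2) (b : Fin c → Bool)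
    (S : Finset (Fin n)) :
    fCoeff (parityIndicator v b) S = (2 : ℝ) ^ (-(c : ℤ)) *
      ∑ T : Finset (Fin c), (∏ j ∈ T, bsgn (b j)) *
        if oneSupport (∑ j ∈ T, v j) = S then 1 else 0 := by
  simp only [funext (parityIndicator_eq_sum v b), fCoeff_const_mul, fCoeff_sum, fCoeff_chi]

variable {v : Fin c → Fin n → ZMod 2}

lemma fCoeff_parityIndicator_oneSupport_sum (hv : LinearIndependent (ZMod 2) v)
    (b : Fin c → Bool) (T₀ : Finset (Fin c)) :
    fCoeff (parityIndicator v b) (oneSupport (∑ j ∈ T₀, v j))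
      = (2 : ℝ) ^ (-(c : ℤ)) * ∏ j ∈ T₀, bsgn (b j) := by
  rw [fCoeff_parityIndicator, sum_eq_single T₀]
  · simp
  · intro T _ hT
    rw [if_neg fun h => hT (hv.injective_sum (oneSupport_injective h)), mul_zero]
  · simp

lemma fCoeff_parityIndicator_empty (hv : LinearIndependent (ZMod 2) v) (b : Fin c → Bool) :
    fCoeff (parityIndicator v b) ∅ = (2 : ℝ) ^ (-(c : ℤ)) := by
  simpa [oneSupport] using fCoeff_parityIndicator_oneSupport_sum hv b ∅

lemma fCoeff_parityIndicator_sq_of_ne_zero (hv : LinearIndependent (ZMod 2) v)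
    (b : Fin c → Bool) {S : Finset (Fin n)} (hS : fCoeff (parityIndicator v b) S ≠ 0) :
    fCoeff (parityIndicator v b) S ^ 2 = ((2 : ℝ) ^ (-(c : ℤ))) ^ 2 := by
  obtain ⟨T₀, rfl⟩ : ∃ T₀, oneSupport (∑ j ∈ T₀, v j) = S := by
    by_contra! h
    simp [fCoeff_parityIndicator, h] at hS
  rw [fCoeff_parityIndicator_oneSupport_sum hv, mul_pow, ← prod_pow]
  simp [sq, bsgn_mul_self]

lemma fCoeff_mul_parityIndicator_eq_zero {f : (Fin n → Bool) → ℝ} (b : Fin c → Bool)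
    (hconst : ∀ x y, SatisfiesParities v b x → SatisfiesParities v b y → f x = f y)
    {S : Finset (Fin n)} (hS : fCoeff (parityIndicator v b) S = 0) :
    fCoeff (fun x => f x * parityIndicator v b x) S = 0 := by
  obtain ⟨ε, hε⟩ : ∃ ε, ∀ x, f x * parityIndicator v b x = ε * parityIndicator v b x := by
    by_cases hne : ∃ y, SatisfiesParities v b y
    · obtain ⟨y, hy⟩ := hne
      refine ⟨f y, fun x => ?_⟩
      by_cases hx : SatisfiesParities v b x
      · rw [hconst x y hx hy]
      · simp [parityIndicator, hx]
    · exact ⟨0, fun x => by simp [parityIndicator, not_exists.1 hne x]⟩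
  simp only [hε, fCoeff_const_mul, hS, mul_zero]

end Parity

lemma mul_log_inv_le {p q : ℝ} (hp : 0 ≤ p) (hq : 0 ≤ q) (hpq : 0 < p → 0 < q) :
    p * Real.log (1 / p) ≤ p * Real.log (1 / q) + (q - p) := by
  rcases hp.eq_or_lt with rfl | hp
  · simpa using hq
  have hq := hpq hp
  have hlog := Real.log_le_sub_one_of_pos (div_pos hq hp)
  rw [Real.log_div hq.ne' hp.ne'] at hlog
  have key := mul_le_mul_of_nonneg_left hlog hp.le
  rw [show p * (q / p - 1) = q - p by field_simp] at key
  simp only [one_div, Real.log_inv]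
  linarith

theorem sum_mul_logb_inv_le {α : Type*} (s : Finset α) {p q : α → ℝ} {β : ℝ} (hβ : 1 < β)
    (hp : ∀ a ∈ s, 0 ≤ p a) (hq : ∀ a ∈ s, 0 ≤ q a) (hpq : ∀ a ∈ s, 0 < p a → 0 < q a)
    (hsum : ∑ a ∈ s, q a ≤ ∑ a ∈ s, p a) :
    ∑ a ∈ s, p a * Real.logb β (1 / p a) ≤ ∑ a ∈ s, p a * Real.logb β (1 / q a) := by
  simp only [Real.logb, ← mul_div_assoc, ← sum_div]
  refine div_le_div_of_nonneg_right ?_ (Real.log_pos hβ).le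
  calc ∑ a ∈ s, p a * Real.log (1 / p a)
      ≤ ∑ a ∈ s, (p a * Real.log (1 / q a) + (q a - p a)) :=
        sum_le_sum fun a ha => mul_log_inv_le (hp a ha) (hq a ha) (hpq a ha)
    _ ≤ ∑ a ∈ s, p a * Real.log (1 / q a) := by
        rw [sum_add_distrib, sum_sub_distrib]
        linarith

lemma sum_mul_natCast_eq_sum_range {α : Type*} (s : Finset α) (w : α → ℝ) (a : α → ℕ) {N : ℕ}
    (ha : ∀ x ∈ s, a x ≤ N) :
    ∑ x ∈ s, w x * a x = ∑ k ∈ range N, ∑ x ∈ s with k < a x, w x := by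
  calc ∑ x ∈ s, w x * a x = ∑ x ∈ s, ∑ _k ∈ range (a x), w x := by simp [mul_comm]
    _ = ∑ k ∈ range N, ∑ x ∈ s with k < a x, w x := by
      refine sum_comm' fun x k => ?_
      simp only [mem_range, mem_filter]
      exact ⟨fun ⟨hx, hk⟩ => ⟨⟨hx, hk⟩, hk.trans_le (ha x hx)⟩, fun ⟨h, _⟩ => h⟩

-- `sInf ∅ = 0` is harmless: `f̂(S) = 0` whenever every `Ĝ_i(S)` vanishes.
noncomputable def minCodim {n : ℕ} {ι : Type*} (c : ι → ℕ) (G : ι → (Fin n → Bool) → ℝ)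
    (S : Finset (Fin n)) : ℕ :=
  sInf (c '' {i | fCoeff (G i) S ≠ 0})

section Certificate

variable {n : ℕ} {ι : Type*} {c : ι → ℕ}
  {v : (i : ι) → Fin (c i) → Fin n → ZMod 2} {b : (i : ι) → Fin (c i) → Bool}
  {f : (Fin n → Bool) → ℝ}

lemma parityIndicator_eq_zero_of_ne (hpart : ∀ x, ∃! i, SatisfiesParities (v i) (b i) x)
    {x : Fin n → Bool} {i₀ i : ι} (h₀ : SatisfiesParities (v i₀) (b i₀) x) (hi : i ≠ i₀) :
    parityIndicator (v i) (b i) x = 0 :=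
  if_neg fun h => hi ((hpart x).unique h h₀)

lemma sum_parityIndicator_sq (hpart : ∀ x, ∃! i, SatisfiesParities (v i) (b i) x)
    (s : Finset ι) (x : Fin n → Bool) :
    (∑ i ∈ s, parityIndicator (v i) (b i) x) ^ 2 = ∑ i ∈ s, parityIndicator (v i) (b i) x := by
  obtain ⟨i₀, h₀, -⟩ := hpart x
  have hzero := fun i => parityIndicator_eq_zero_of_ne hpart (i := i) h₀
  by_cases hs : i₀ ∈ s
  · rw [sum_eq_single_of_mem i₀ hs fun i _ => hzero i, parityIndicator_of_satisfies h₀, one_pow]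
  · rw [sum_eq_zero fun i hi => hzero i (ne_of_mem_of_not_mem hi hs), zero_pow two_ne_zero]

lemma sum_fCoeff_restrict_sq (hf : IsBooleanFunc f)
    (hpart : ∀ x, ∃! i, SatisfiesParities (v i) (b i) x)
    (hv : ∀ i, LinearIndependent (ZMod 2) (v i)) (s : Finset ι) :
    ∑ S, fCoeff (fun x => ∑ i ∈ s, f x * parityIndicator (v i) (b i) x) S ^ 2
      = ∑ i ∈ s, (2 : ℝ) ^ (-(c i : ℤ)) := by
  have hsq : ∀ x, (∑ i ∈ s, f x * parityIndicator (v i) (b i) x) ^ 2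
      = ∑ i ∈ s, parityIndicator (v i) (b i) x := fun x => by
    have hfx : f x ^ 2 = 1 := by rcases hf x with h | h <;> norm_num [h]
    rw [← mul_sum, mul_pow, hfx, one_mul, sum_parityIndicator_sq hpart]
  rw [sum_fCoeff_sq]
  simp only [hsq, fCoeff_sum, fCoeff_parityIndicator_empty (hv _)]

variable [Fintype ι]

lemma sum_parityIndicator_eq_one (hpart : ∀ x, ∃! i, SatisfiesParities (v i) (b i) x)
    (x : Fin n → Bool) : ∑ i, parityIndicator (v i) (b i) x = 1 := by
  obtain ⟨i₀, h₀, -⟩ := hpart x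
  rw [sum_eq_single i₀ (fun i _ => parityIndicator_eq_zero_of_ne hpart h₀) (by simp),
    parityIndicator_of_satisfies h₀]

lemma fCoeff_eq_fCoeff_restrict (hpart : ∀ x, ∃! i, SatisfiesParities (v i) (b i) x)
    (hconst : ∀ i x y, SatisfiesParities (v i) (b i) x → SatisfiesParities (v i) (b i) y →
      f x = f y)
    (s : Finset ι) {S : Finset (Fin n)}
    (hS : ∀ i ∉ s, fCoeff (parityIndicator (v i) (b i)) S = 0) :
    fCoeff f S = fCoeff (fun x => ∑ i ∈ s, f x * parityIndicator (v i) (b i) x) S := by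
  have hf : f = fun x => ∑ i, f x * parityIndicator (v i) (b i) x := by
    simp only [← mul_sum, sum_parityIndicator_eq_one hpart, mul_one]
  conv_lhs => rw [hf]
  rw [fCoeff_sum, fCoeff_sum]
  exact (sum_subset (subset_univ s) fun i _ hi =>
    fCoeff_mul_parityIndicator_eq_zero (b i) (hconst i) (hS i hi)).symm

lemma exists_fCoeff_parityIndicator_ne_zero
    (hpart : ∀ x, ∃! i, SatisfiesParities (v i) (b i) x)
    (hconst : ∀ i x y, SatisfiesParities (v i) (b i) x → SatisfiesParities (v i) (b i) y →
      f x = f y)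
    {S : Finset (Fin n)} (hS : fCoeff f S ≠ 0) :
    ∃ i, fCoeff (parityIndicator (v i) (b i)) S ≠ 0 := by
  by_contra! h
  apply hS
  rw [fCoeff_eq_fCoeff_restrict hpart hconst ∅ fun i _ => h i]
  simp [fCoeff]

lemma sum_sum_sq_fCoeff_parityIndicator (hf : IsBooleanFunc f)
    (hpart : ∀ x, ∃! i, SatisfiesParities (v i) (b i) x)
    (hconst : ∀ i x y, SatisfiesParities (v i) (b i) x → SatisfiesParities (v i) (b i) y →
      f x = f y)
    (hv : ∀ i, LinearIndependent (ZMod 2) (v i)) :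
    ∑ S, ∑ i, fCoeff (parityIndicator (v i) (b i)) S ^ 2 = ∑ S, fCoeff f S ^ 2 := by
  have hf_eq : ∀ S, fCoeff f S
      = fCoeff (fun x => ∑ i, f x * parityIndicator (v i) (b i) x) S := fun S =>
    fCoeff_eq_fCoeff_restrict hpart hconst univ (by simp)
  rw [sum_comm]
  simp only [sum_fCoeff_sq (parityIndicator _ _), parityIndicator_sq,
    fCoeff_parityIndicator_empty (hv _), hf_eq]
  exact (sum_fCoeff_restrict_sq hf hpart hv univ).symm

lemma sum_sq_fCoeff_parityIndicator_pos
    (hpart : ∀ x, ∃! i, SatisfiesParities (v i) (b i) x)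
    (hconst : ∀ i x y, SatisfiesParities (v i) (b i) x → SatisfiesParities (v i) (b i) y →
      f x = f y)
    {S : Finset (Fin n)} (hS : fCoeff f S ≠ 0) :
    0 < ∑ i, fCoeff (parityIndicator (v i) (b i)) S ^ 2 := by
  obtain ⟨i, hi⟩ := exists_fCoeff_parityIndicator_ne_zero hpart hconst hS
  exact lt_of_lt_of_le (by positivity) (single_le_sum
    (f := fun i => fCoeff (parityIndicator (v i) (b i)) S ^ 2) (fun _ _ => sq_nonneg _)
    (mem_univ i))

lemma logb_inv_sum_sq_fCoeff_parityIndicator_le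
    (hpart : ∀ x, ∃! i, SatisfiesParities (v i) (b i) x)
    (hconst : ∀ i x y, SatisfiesParities (v i) (b i) x → SatisfiesParities (v i) (b i) y →
      f x = f y)
    (hv : ∀ i, LinearIndependent (ZMod 2) (v i)) {S : Finset (Fin n)} (hS : fCoeff f S ≠ 0) :
    Real.logb 2 (1 / ∑ i, fCoeff (parityIndicator (v i) (b i)) S ^ 2)
      ≤ 2 * minCodim c (fun i => parityIndicator (v i) (b i)) S := by
  obtain ⟨i, hi⟩ := exists_fCoeff_parityIndicator_ne_zero hpart hconst hS
  obtain ⟨i₀, hi₀, hc⟩ :=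
    Nat.sInf_mem (s := c '' {i | fCoeff (parityIndicator (v i) (b i)) S ≠ 0}) ⟨c i, i, hi, rfl⟩
  rw [minCodim, ← hc]
  have hlow : ((2 : ℝ) ^ (-(c i₀ : ℤ))) ^ 2
      ≤ ∑ i, fCoeff (parityIndicator (v i) (b i)) S ^ 2 := by
    rw [← fCoeff_parityIndicator_sq_of_ne_zero (hv i₀) (b i₀) hi₀]
    exact single_le_sum (f := fun i => fCoeff (parityIndicator (v i) (b i)) S ^ 2)
      (fun _ _ => sq_nonneg _) (mem_univ i₀)
  have hpow : 1 / ((2 : ℝ) ^ (-(c i₀ : ℤ))) ^ 2 = 2 ^ (2 * c i₀) := by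
    rw [zpow_neg, zpow_natCast, inv_pow, one_div, inv_inv, ← pow_mul']
  calc Real.logb 2 (1 / ∑ i, fCoeff (parityIndicator (v i) (b i)) S ^ 2)
      ≤ Real.logb 2 (1 / ((2 : ℝ) ^ (-(c i₀ : ℤ))) ^ 2) :=
        Real.logb_le_logb_of_le one_lt_two
          (one_div_pos.2 (sum_sq_fCoeff_parityIndicator_pos hpart hconst hS))
          (one_div_le_one_div_of_le (by positivity) hlow)
    _ = 2 * c i₀ := by
        rw [hpow, Real.logb_pow, Real.logb_self_eq_one one_lt_two]
        push_cast
        ring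

lemma sum_sq_fCoeff_filter_lt_minCodim_le (hf : IsBooleanFunc f)
    (hpart : ∀ x, ∃! i, SatisfiesParities (v i) (b i) x)
    (hconst : ∀ i x y, SatisfiesParities (v i) (b i) x → SatisfiesParities (v i) (b i) y →
      f x = f y)
    (hv : ∀ i, LinearIndependent (ZMod 2) (v i)) (k : ℕ) :
    ∑ S with k < minCodim c (fun i => parityIndicator (v i) (b i)) S, fCoeff f S ^ 2
      ≤ ∑ i with k < c i, (2 : ℝ) ^ (-(c i : ℤ)) := by
  set s : Finset ι := {i | k < c i}
  have hagree : ∀ S, k < minCodim c (fun i => parityIndicator (v i) (b i)) S →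
      fCoeff f S = fCoeff (fun x => ∑ i ∈ s, f x * parityIndicator (v i) (b i) x) S := by
    refine fun S hk => fCoeff_eq_fCoeff_restrict hpart hconst s fun i hi => ?_
    by_contra hne
    have := Nat.sInf_le (Set.mem_image_of_mem c
      (show i ∈ {i | fCoeff (parityIndicator (v i) (b i)) S ≠ 0} from hne))
    simp only [s, mem_filter, mem_univ, true_and, not_lt] at hi
    exact absurd (hk.trans_le this) (not_lt.2 hi)
  calc ∑ S with k < minCodim c (fun i => parityIndicator (v i) (b i)) S, fCoeff f S ^ 2
      = ∑ S with k < minCodim c (fun i => parityIndicator (v i) (b i)) S,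
          fCoeff (fun x => ∑ i ∈ s, f x * parityIndicator (v i) (b i) x) S ^ 2 :=
        sum_congr rfl fun S hS => by rw [hagree S (mem_filter.1 hS).2]
    _ ≤ ∑ S, fCoeff (fun x => ∑ i ∈ s, f x * parityIndicator (v i) (b i) x) S ^ 2 :=
        sum_le_sum_of_subset_of_nonneg (filter_subset _ _) fun _ _ _ => sq_nonneg _
    _ = ∑ i ∈ s, (2 : ℝ) ^ (-(c i : ℤ)) := sum_fCoeff_restrict_sq hf hpart hv s

lemma minCodim_le_sup (G : ι → (Fin n → Bool) → ℝ) (S : Finset (Fin n)) :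
    minCodim c G S ≤ univ.sup c := by
  rcases (c '' {i | fCoeff (G i) S ≠ 0}).eq_empty_or_nonempty with h | h
  · simp [minCodim, h]
  · obtain ⟨i, -, hi⟩ := Nat.sInf_mem h
    rw [minCodim, ← hi]
    exact le_sup (mem_univ i)

lemma sum_sq_fCoeff_mul_minCodim_le (hf : IsBooleanFunc f)
    (hpart : ∀ x, ∃! i, SatisfiesParities (v i) (b i) x)
    (hconst : ∀ i x y, SatisfiesParities (v i) (b i) x → SatisfiesParities (v i) (b i) y →
      f x = f y)
    (hv : ∀ i, LinearIndependent (ZMod 2) (v i)) :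
    ∑ S, fCoeff f S ^ 2 * minCodim c (fun i => parityIndicator (v i) (b i)) S
      ≤ ∑ i, (2 : ℝ) ^ (-(c i : ℤ)) * c i := by
  rw [sum_mul_natCast_eq_sum_range _ _ _ fun S _ => minCodim_le_sup _ S,
    sum_mul_natCast_eq_sum_range _ _ c fun i _ => le_sup (mem_univ i)]
  exact sum_le_sum fun k _ => sum_sq_fCoeff_filter_lt_minCodim_le hf hpart hconst hv k

end Certificate

/-- Let `𝒞` be an unambiguous `⊕`-certificate for `f`: a family of
𝔽₂-affine subspaces, the `i`-th given by `c i` linearly independent parity constraints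
`∏_{l ∈ supp(v i j)} x_l = b i j`, that partitions `{-1,1}^n` (every point lies in exactly
one part) and on each of which `f` is constant.  Then
`H(f̂²) ≤ 2 · aUC^⊕(f,𝒞)` where `aUC^⊕(f,𝒞) = Σ_i 2^{-c_i}·c_i`.
(In particular, minimizing over `𝒞`, `H(f̂²) ≤ 2·aUC^⊕(f)`.) -/
theorem stmt7 {n t : ℕ} (f : (Fin n → Bool) → ℝ) (hf : IsBooleanFunc f)
    (c : Fin t → ℕ)
    (v : (i : Fin t) → Fin (c i) → (Fin n → ZMod 2))
    (b : (i : Fin t) → Fin (c i) → Bool)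
    (hli : ∀ i, LinearIndependent (ZMod 2) (v i))
    (hpart : ∀ x : Fin n → Bool, ∃! i : Fin t,
      ∀ j, ∏ l ∈ Finset.univ.filter (fun l => v i j l = 1), bsgn (x l) = bsgn (b i j))
    (hmono : ∀ i : Fin t, ∀ x y : Fin n → Bool,
      (∀ j, ∏ l ∈ Finset.univ.filter (fun l => v i j l = 1), bsgn (x l) = bsgn (b i j)) →
      (∀ j, ∏ l ∈ Finset.univ.filter (fun l => v i j l = 1), bsgn (y l) = bsgn (b i j)) →
      f x = f y) :
    fEntropy f ≤ 2 * ∑ i : Fin t, (2 : ℝ) ^ (-(c i : ℤ)) * (c i : ℝ) := by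
  let G i := parityIndicator (v i) (b i)
  have hpart : ∀ x, ∃! i, SatisfiesParities (v i) (b i) x := hpart
  have hconst : ∀ i x y, SatisfiesParities (v i) (b i) x → SatisfiesParities (v i) (b i) y →
      f x = f y := hmono
  calc fEntropy f ≤ ∑ S, fCoeff f S ^ 2 * Real.logb 2 (1 / ∑ i, fCoeff (G i) S ^ 2) :=
        sum_mul_logb_inv_le univ one_lt_two (fun _ _ => sq_nonneg _)
          (fun _ _ => sum_nonneg fun _ _ => sq_nonneg _)
          (fun S _ hS => sum_sq_fCoeff_parityIndicator_pos hpart hconst fun h => by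
            simp [h] at hS)
          (sum_sum_sq_fCoeff_parityIndicator hf hpart hconst hli).le
    _ ≤ ∑ S, fCoeff f S ^ 2 * (2 * minCodim c G S) := by
        refine sum_le_sum fun S _ => ?_
        rcases eq_or_ne (fCoeff f S) 0 with hS | hS
        · simp [hS]
        · exact mul_le_mul_of_nonneg_left
            (logb_inv_sum_sq_fCoeff_parityIndicator_le hpart hconst hli hS) (sq_nonneg _)
    _ = 2 * ∑ S, fCoeff f S ^ 2 * minCodim c G S := by
        rw [mul_sum]
        exact sum_congr rfl fun S _ => by ring
    _ ≤ 2 * ∑ i, (2 : ℝ) ^ (-(c i : ℤ)) * c i := by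
        gcongr
        exact sum_sq_fCoeff_mul_minCodim_le hf hpart hconst hli
end

section
/- Let q₀, q₁, …, q_k : {-1,1}^m → ℝ and define p : {-1,1}^k × {-1,1}^m → ℝ by p(x,z) = q₀(z) + Σ_{i=1}^{k} x_i·q_i(z). Suppose there exists a Boolean function f : {-1,1}^{k+m} → {-1,1} with |p(x,z) − f(x,z)| ≤ 1/8 for all (x,z). Then for every z ∈ {-1,1}^m there exists a unique index j ∈ {0,1,…,k} such that |q_j(z)| ≥ 7/8, and for this j, Σ_{i ∈ {0,…,k}, i ≠ j} |q_i(z)| ≤ 1/8. -/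
open Finset

noncomputable def sg (r : ℝ) : ℝ := if 0 ≤ r then 1 else -1

lemma sg_pm (r : ℝ) : sg r = 1 ∨ sg r = -1 := by unfold sg; split <;> simp

lemma sg_mul (r : ℝ) : sg r * r = |r| := by
  unfold sg
  split
  · rw [abs_of_nonneg ‹_›]; ring
  · rw [abs_of_neg (lt_of_not_ge ‹_›)]; ring

lemma sg_sq (r : ℝ) : sg r * sg r = 1 := by unfold sg; split <;> norm_num

lemma greedy : ∀ (n : ℕ) (b : Fin n → ℝ) (c : ℝ), (∀ i, |b i| ≤ c) → ∀ a : ℝ,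
    ∃ σ : Fin n → ℝ, (∀ i, σ i = 1 ∨ σ i = -1) ∧
      |a + ∑ i, σ i * b i| ≤ max (|a| - ∑ i, |b i|) c := by
  intro n
  induction n with
  | zero =>
    intro b c hc a
    exact ⟨fun _ => 1, fun i => Or.inl rfl, by simp⟩
  | succ n ih =>
    intro b c hc a
    set e : ℝ := -(sg a * sg (b 0)) with he
    have ha0 : a = sg a * |a| := by
      rw [← sg_mul, ← mul_assoc, sg_sq, one_mul]
    have hstep : a + e * b 0 = sg a * (|a| - |b 0|) := by
      rw [he]
      have : sg a * sg (b 0) * b 0 = sg a * |b 0| := by rw [mul_assoc, sg_mul]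
      nlinarith [this, ha0]
    have habs : |a + e * b 0| = |(|a| - |b 0|)| := by
      rw [hstep, abs_mul]
      rcases sg_pm a with h | h <;> rw [h] <;> simp
    obtain ⟨σ', hσ'pm, hσ'⟩ := ih (fun i => b i.succ) c (fun i => hc i.succ) (a + e * b 0)
    refine ⟨Fin.cons e σ', ?_, ?_⟩
    · intro i
      refine Fin.cases ?_ ?_ i
      · rw [Fin.cons_zero, he]
        rcases sg_pm a with h | h <;> rcases sg_pm (b 0) with h' | h' <;>
          rw [h, h'] <;> norm_num
      · intro j; rw [Fin.cons_succ]; exact hσ'pm j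
    · have hR : (0:ℝ) ≤ ∑ i : Fin n, |b i.succ| :=
        Finset.sum_nonneg fun i _ => abs_nonneg _
      have hsum : ∑ i : Fin (n+1), (Fin.cons e σ' : Fin (n+1) → ℝ) i * b i
          = e * b 0 + ∑ i : Fin n, σ' i * b i.succ := by
        rw [Fin.sum_univ_succ]
        simp [Fin.cons_succ, Fin.cons_zero]
      have hsum2 : ∑ i : Fin (n+1), |b i| = |b 0| + ∑ i : Fin n, |b i.succ| :=
        Fin.sum_univ_succ _
      rw [hsum, hsum2, ← add_assoc]
      refine le_trans hσ' ?_
      have h1 : |a + e * b 0| ≤ max (|a| - |b 0|) (|b 0|) := by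
        rw [habs]
        rcases le_total (|b 0|) (|a|) with h | h
        · rw [abs_of_nonneg (by linarith)]; exact le_max_left _ _
        · rw [abs_of_nonpos (by linarith)]
          exact le_trans (by linarith [abs_nonneg a]) (le_max_right _ _)
      rcases le_max_iff.mp h1 with h | h
      · have : |a + e * b 0| - ∑ i : Fin n, |b i.succ|
            ≤ |a| - (|b 0| + ∑ i : Fin n, |b i.succ|) := by linarith
        exact max_le_max this (le_refl c)
      · have hc0 : |b 0| ≤ c := hc 0
        refine max_le ?_ (le_max_right _ _)
        exact le_trans (by linarith) (le_max_right _ _)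

/-- Let `p(x,z) = q₀(z) + Σ_{i=1}^k x_i·q_i(z)` (here the coefficient
functions are `q : Fin (k+1) → ({-1,1}^m → ℝ)`, with `q 0` the constant term and
`q i.succ` the coefficient of `x_i`), and suppose `p` pointwise `1/8`-approximates a
Boolean function `f` on `{-1,1}^k × {-1,1}^m`.  Then for every `z` there is a unique index
`j ∈ {0,…,k}` with `|q_j(z)| ≥ 7/8`, and for this `j`, `Σ_{i ≠ j} |q_i(z)| ≤ 1/8`. -/
theorem stmt16 {k m : ℕ} (q : Fin (k + 1) → (Fin m → Bool) → ℝ)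
    (p : (Fin k → Bool) → (Fin m → Bool) → ℝ)
    (hp : ∀ x z, p x z = q 0 z + ∑ i : Fin k, bsgn (x i) * q i.succ z)
    (f : (Fin k → Bool) → (Fin m → Bool) → ℝ)
    (hf : ∀ x z, f x z = 1 ∨ f x z = -1)
    (happrox : ∀ x z, |p x z - f x z| ≤ 1 / 8) :
    ∀ z : Fin m → Bool, ∃ j : Fin (k + 1),
      7 / 8 ≤ |q j z| ∧
      (∑ i ∈ Finset.univ.erase j, |q i z|) ≤ 1 / 8 ∧
      ∀ j' : Fin (k + 1), 7 / 8 ≤ |q j' z| → j' = j := by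
  intro z
  classical
  -- absolute values of the coefficients
  set b : Fin (k + 1) → ℝ := fun i => |q i z| with hbdef
  have hbq : ∀ i, b i = |q i z| := fun i => rfl
  have hbnn : ∀ i, 0 ≤ b i := fun i => abs_nonneg _
  -- bound on all sign combinations
  have hA : ∀ σ : Fin k → ℝ, (∀ i, σ i = 1 ∨ σ i = -1) →
      7/8 ≤ |q 0 z + ∑ i : Fin k, σ i * q i.succ z| ∧
      |q 0 z + ∑ i : Fin k, σ i * q i.succ z| ≤ 9/8 := by
    intro σ hσ
    set x : Fin k → Bool := fun i => if σ i = 1 then true else false with hx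
    have hbs : ∀ i, bsgn (x i) = σ i := by
      intro i
      rcases hσ i with h | h
      · simp [hx, bsgn, h]
      · have hne : ¬ (σ i = 1) := by rw [h]; norm_num
        show bsgn (if σ i = 1 then true else false) = σ i
        rw [if_neg hne, h]; simp [bsgn]
    have hPA : p x z = q 0 z + ∑ i : Fin k, σ i * q i.succ z := by
      rw [hp]
      congr 1
      exact Finset.sum_congr rfl fun i _ => by rw [hbs]
    have h1 := happrox x z
    rw [hPA] at h1
    have hfa : |f x z| = 1 := by rcases hf x z with h | h <;> rw [h] <;> norm_num
    have h3 := abs_sub_abs_le_abs_sub (q 0 z + ∑ i : Fin k, σ i * q i.succ z) (f x z)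
    have h4 := abs_sub_abs_le_abs_sub (f x z) (q 0 z + ∑ i : Fin k, σ i * q i.succ z)
    rw [abs_sub_comm] at h4
    constructor <;> linarith
  set s : ℝ := sg (q 0 z) with hs
  set T : ℝ := ∑ i : Fin k, b i.succ with hT
  have hT0 : 0 ≤ T := Finset.sum_nonneg fun i _ => hbnn _
  have hspm : s = 1 ∨ s = -1 := sg_pm _
  have hsabs : |s| = 1 := by rcases hspm with h | h <;> rw [h] <;> norm_num
  have ha0s : s * b 0 = q 0 z := by
    rw [hbq, hs, ← sg_mul, ← mul_assoc, sg_sq, one_mul]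
  -- reduction to absolute values of coefficients
  have hB : ∀ d : Fin k → ℝ, (∀ i, d i = 1 ∨ d i = -1) →
      7/8 ≤ |q 0 z + ∑ i : Fin k, d i * b i.succ| ∧
      |q 0 z + ∑ i : Fin k, d i * b i.succ| ≤ 9/8 := by
    intro d hd
    have hpm : ∀ i, d i * sg (q i.succ z) = 1 ∨ d i * sg (q i.succ z) = -1 := by
      intro i
      rcases hd i with h | h <;> rcases sg_pm (q i.succ z) with h' | h' <;>
        rw [h, h'] <;> norm_num
    have h := hA (fun i => d i * sg (q i.succ z)) hpm
    have hrw : ∀ i : Fin k, d i * sg (q i.succ z) * q i.succ z = d i * b i.succ := by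
      intro i; rw [mul_assoc, sg_mul, hbq]
    simpa only [hrw] using h
  -- value at the fully aligned point : |b 0 + T|
  have hSle : 7/8 ≤ b 0 + T ∧ b 0 + T ≤ 9/8 := by
    have h := hB (fun _ => s) (fun _ => hspm)
    have he : q 0 z + ∑ i : Fin k, s * b i.succ = s * (b 0 + T) := by
      rw [← Finset.mul_sum, ← hT, mul_add, ha0s]
    rw [he, abs_mul, hsabs, one_mul, abs_of_nonneg (by linarith [hbnn 0])] at h
    exact h
  -- value flipping one coordinate
  have hjk : ∀ j : Fin k, 7/8 ≤ |b 0 + T - 2 * b j.succ| := by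
    intro j
    have hd : ∀ i : Fin k, (if i = j then -s else s) = 1 ∨ (if i = j then -s else s) = -1 := by
      intro i; split <;> rcases hspm with h | h <;> rw [h] <;> norm_num
    have h := (hB _ hd).1
    have hsum : ∑ i : Fin k, (if i = j then -s else s) * b i.succ
        = s * T - 2 * (s * b j.succ) := by
      have hterm : ∀ i : Fin k, (if i = j then -s else s) * b i.succ
          = s * b i.succ - (if i = j then 2 * (s * b j.succ) else 0) := by
        intro i
        split
        · rename_i hij; rw [hij]; ring
        · ring
      rw [Finset.sum_congr rfl fun i _ => hterm i, Finset.sum_sub_distrib,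
        Finset.sum_ite_eq' Finset.univ j, ← Finset.mul_sum, ← hT]
      simp
    have he : q 0 z + (s * T - 2 * (s * b j.succ)) = s * (b 0 + T - 2 * b j.succ) := by
      rw [mul_sub, mul_add, ha0s]; ring
    rw [hsum, he, abs_mul, hsabs, one_mul] at h
    exact h
  -- value at the fully anti-aligned point
  have hanti : 7/8 ≤ |b 0 - T| := by
    have hd : ∀ i : Fin k, (-s : ℝ) = 1 ∨ (-s : ℝ) = -1 := by
      intro _; rcases hspm with h | h <;> rw [h] <;> norm_num
    have h := (hB (fun _ => -s) (fun i => hd i)).1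
    have he : q 0 z + ∑ i : Fin k, (-s) * b i.succ = s * (b 0 - T) := by
      rw [← Finset.mul_sum, ← hT, mul_sub, ha0s]; ring
    rw [he, abs_mul, hsabs, one_mul] at h
    exact h
  -- dichotomy for each coefficient of an x-variable
  have hdich : ∀ i : Fin k, b i.succ ≤ 1/8 ∨ 7/8 ≤ b i.succ := by
    intro i
    rcases le_abs.mp (hjk i) with h | h
    · left; linarith [hSle.2]
    · right; linarith [hSle.1]
  -- total sum
  have hStot : ∑ i : Fin (k+1), b i = b 0 + T := by
    rw [Fin.sum_univ_succ, hT]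
  have herase : ∀ J : Fin (k+1), ∑ i ∈ Finset.univ.erase J, b i = b 0 + T - b J := by
    intro J
    have h := Finset.sum_erase_add Finset.univ b (Finset.mem_univ J)
    rw [hStot] at h
    linarith
  by_cases hex : ∃ j : Fin k, 7/8 ≤ b j.succ
  · -- the large coefficient is some q i.succ
    obtain ⟨j, hj7⟩ := hex
    have hwleT : b j.succ ≤ T :=
      Finset.single_le_sum (f := fun i : Fin k => b i.succ) (fun i _ => hbnn _)
        (Finset.mem_univ j)
    have h2 : b 0 + T - 2 * b j.succ ≤ -(7/8) := by
      rcases le_abs.mp (hjk j) with h | h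
      · exfalso; linarith [hSle.2, hbnn 0]
      · linarith
    have hR : b 0 + T - b j.succ ≤ 1/8 := by linarith [hSle.2]
    refine ⟨j.succ, hj7, ?_, ?_⟩
    · rw [show (∑ i ∈ Finset.univ.erase j.succ, |q i z|) = ∑ i ∈ Finset.univ.erase j.succ, b i
        from rfl, herase j.succ]
      linarith
    · intro j' h7'
      by_contra hne
      have hmem : j' ∈ Finset.univ.erase j.succ :=
        Finset.mem_erase.mpr ⟨hne, Finset.mem_univ _⟩
      have hle := Finset.single_le_sum (f := b) (fun i _ => hbnn i) hmem
      rw [herase j.succ] at hle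
      have : (7:ℝ)/8 ≤ b j' := h7'
      linarith
  · push_neg at hex
    have hsmall : ∀ i : Fin k, b i.succ ≤ 1/8 := by
      intro i
      rcases hdich i with h | h
      · exact h
      · exact absurd h (not_le.mpr (hex i))
    rcases le_or_gt T (b 0) with h0T | h0T
    · -- the large coefficient is q 0
      have h7 : 7/8 ≤ b 0 - T := by
        rwa [abs_of_nonneg (by linarith)] at hanti
      have hT18 : T ≤ 1/8 := by linarith [hSle.2]
      refine ⟨0, by have := hbq 0; linarith, ?_, ?_⟩
      · rw [show (∑ i ∈ Finset.univ.erase (0 : Fin (k+1)), |q i z|)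
            = ∑ i ∈ Finset.univ.erase (0 : Fin (k+1)), b i from rfl, herase 0]
        linarith
      · intro j' h7'
        by_contra hne
        obtain ⟨i, rfl⟩ := Fin.eq_succ_of_ne_zero hne
        have : (7:ℝ)/8 ≤ b i.succ := h7'
        linarith [hsmall i]
    · -- contradiction : all coefficients are small
      exfalso
      obtain ⟨σ, hσpm, hσ⟩ := greedy k (fun i => q i.succ z) (1/8)
        (fun i => hsmall i) (q 0 z)
      have h1 := (hA σ hσpm).1
      have hTeq : ∑ i : Fin k, |q i.succ z| = T := by
        rfl
      rw [hTeq] at hσ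
      have h2 : max (|q 0 z| - T) (1/8 : ℝ) ≤ 1/8 :=
        max_le (by have := hbq 0; linarith) le_rfl
      have := le_trans hσ h2
      linarith
end

section
/- Let A₁, …, A_d be a partition of [n] and let p : {-1,1}^n → ℝ be a block-multilinear polynomial with respect to this partition, i.e. every S ⊆ [n] with p̂(S) ≠ 0 satisfies |S ∩ A_j| ≤ 1 for every j ∈ [d]. If f : {-1,1}^n → {-1,1} is a Boolean function with |p(x) − f(x)| ≤ 1/8 for all x ∈ {-1,1}^n, then deg(f) ≤ d, i.e. f̂(S) = 0 for every S with |S| > d. -/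
open Finset

lemma chi_update_notmem {n : ℕ} {S : Finset (Fin n)} {a : Fin n} (ha : a ∉ S)
    (x : Fin n → Bool) (c : Bool) : chi S (Function.update x a c) = chi S x := by
  unfold chi
  refine Finset.prod_congr rfl fun i hi => ?_
  rw [Function.update_of_ne (ne_of_mem_of_not_mem hi ha)]

lemma sum_update_bool {n : ℕ} (G : (Fin n → Bool) → ℝ) (a : Fin n) :
    ∑ x : Fin n → Bool, ∑ c : Bool, G (Function.update x a c) = 2 * ∑ x : Fin n → Bool, G x := by
  have hflip : ∀ x : Fin n → Bool, ∑ c : Bool, G (Function.update x a c)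
      = G x + G (Function.update x a (!x a)) := by
    intro x
    rw [Fintype.sum_bool]
    cases h : x a
    · have hx : Function.update x a false = x := by rw [← h, Function.update_eq_self]
      rw [Bool.not_false, hx]
      exact add_comm _ _
    · have hx : Function.update x a true = x := by rw [← h, Function.update_eq_self]
      rw [Bool.not_true, hx]
  have hbij : Function.Bijective (fun x : Fin n → Bool => Function.update x a (!x a)) := by
    have hinv : Function.Involutive (fun x : Fin n → Bool => Function.update x a (!x a)) := by
      intro x
      simp [Function.update_idem]
    exact hinv.bijective
  have hsum2 : ∑ x : Fin n → Bool, G (Function.update x a (!x a)) = ∑ x : Fin n → Bool, G x :=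
    Fintype.sum_bijective _ hbij _ _ (fun x => rfl)
  calc ∑ x : Fin n → Bool, ∑ c : Bool, G (Function.update x a c)
      = ∑ x : Fin n → Bool, (G x + G (Function.update x a (!x a))) :=
        Finset.sum_congr rfl fun x _ => hflip x
    _ = (∑ x : Fin n → Bool, G x) + ∑ x : Fin n → Bool, G (Function.update x a (!x a)) :=
        Finset.sum_add_distrib
    _ = 2 * ∑ x : Fin n → Bool, G x := by rw [hsum2]; ring

lemma sum_update_bool2 {n : ℕ} (G : (Fin n → Bool) → ℝ) (a b : Fin n) :
    ∑ x : Fin n → Bool, ∑ ε : Bool, ∑ δ : Bool,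
      G (Function.update (Function.update x a ε) b δ) = 4 * ∑ x : Fin n → Bool, G x := by
  calc ∑ x : Fin n → Bool, ∑ ε : Bool, ∑ δ : Bool,
        G (Function.update (Function.update x a ε) b δ)
      = ∑ x : Fin n → Bool, ∑ ε : Bool,
        (fun z => ∑ δ : Bool, G (Function.update z b δ)) (Function.update x a ε) := rfl
    _ = 2 * ∑ x : Fin n → Bool, ∑ δ : Bool, G (Function.update x b δ) :=
        sum_update_bool (fun z => ∑ δ : Bool, G (Function.update z b δ)) a
    _ = 2 * (2 * ∑ x : Fin n → Bool, G x) := by rw [sum_update_bool]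
    _ = 4 * ∑ x : Fin n → Bool, G x := by ring

lemma sum_chi_chi {n : ℕ} (x y : Fin n → Bool) :
    ∑ S : Finset (Fin n), chi S x * chi S y = if x = y then (2:ℝ)^n else 0 := by
  have step1 : ∑ S : Finset (Fin n), chi S x * chi S y
      = ∏ i : Fin n, (bsgn (x i) * bsgn (y i) + 1) := by
    rw [Finset.prod_add]
    simp only [Finset.prod_const_one, mul_one]
    rw [Finset.powerset_univ]
    refine Finset.sum_congr rfl fun S _ => ?_
    unfold chi
    rw [← Finset.prod_mul_distrib]
  rw [step1]
  by_cases hxy : x = y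
  · subst hxy
    rw [if_pos rfl]
    calc ∏ i : Fin n, (bsgn (x i) * bsgn (x i) + 1) = ∏ i : Fin n, (2:ℝ) := by
          refine Finset.prod_congr rfl fun i _ => ?_
          unfold bsgn; cases x i <;> norm_num
      _ = (2:ℝ)^n := by simp
  · rw [if_neg hxy]
    obtain ⟨i, hi⟩ := Function.ne_iff.mp hxy
    refine Finset.prod_eq_zero (Finset.mem_univ i) ?_
    unfold bsgn
    cases hx : x i <;> cases hy : y i <;> simp_all

lemma fourier_inversion {n : ℕ} (h : (Fin n → Bool) → ℝ) (x : Fin n → Bool) :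
    ∑ S : Finset (Fin n), fCoeff h S * chi S x = h x := by
  have key : ∑ S : Finset (Fin n), (∑ y : Fin n → Bool, h y * chi S y) * chi S x
      = (2:ℝ)^n * h x := by
    calc ∑ S : Finset (Fin n), (∑ y : Fin n → Bool, h y * chi S y) * chi S x
        = ∑ S : Finset (Fin n), ∑ y : Fin n → Bool, h y * (chi S y * chi S x) := by
          refine Finset.sum_congr rfl fun S _ => ?_
          rw [Finset.sum_mul]
          exact Finset.sum_congr rfl fun y _ => by ring
      _ = ∑ y : Fin n → Bool, ∑ S : Finset (Fin n), h y * (chi S y * chi S x) :=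
          Finset.sum_comm
      _ = ∑ y : Fin n → Bool, h y * (if y = x then (2:ℝ)^n else 0) := by
          refine Finset.sum_congr rfl fun y _ => ?_
          rw [← Finset.mul_sum, sum_chi_chi]
      _ = (2:ℝ)^n * h x := by
          rw [Finset.sum_eq_single x]
          · simp [mul_comm]
          · intro y _ hy; simp [hy]
          · intro hx; exact absurd (Finset.mem_univ x) hx
  unfold fCoeff
  have h2 : ((2:ℝ)^n) ≠ 0 := by positivity
  calc ∑ S : Finset (Fin n), (∑ y : Fin n → Bool, h y * chi S y) / 2 ^ n * chi S x
      = (∑ S : Finset (Fin n), (∑ y : Fin n → Bool, h y * chi S y) * chi S x) / 2^n := by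
        rw [Finset.sum_div]
        exact Finset.sum_congr rfl fun S _ => by ring
    _ = h x := by rw [key]; field_simp

set_option maxHeartbeats 1000000 in
/-- Let `A₁,…,A_d` partition `[n]` and let `p` be block-multilinear with
respect to this partition (every `S` with `p̂(S) ≠ 0` meets each block in at most one
coordinate).  If `p` pointwise `1/8`-approximates a Boolean function `f`, then
`deg(f) ≤ d`, i.e. `f̂(S) = 0` whenever `|S| > d`. -/
theorem stmt17 {n d : ℕ} (A : Fin d → Finset (Fin n))
    (hdisj : ∀ j j' : Fin d, j ≠ j' → Disjoint (A j) (A j'))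
    (hcover : ∀ i : Fin n, ∃ j, i ∈ A j)
    (p f : (Fin n → Bool) → ℝ) (hf : IsBooleanFunc f)
    (hblock : ∀ S : Finset (Fin n), fCoeff p S ≠ 0 → ∀ j : Fin d, (S ∩ A j).card ≤ 1)
    (happrox : ∀ x, |p x - f x| ≤ 1 / 8) :
    ∀ S : Finset (Fin n), d < S.card → fCoeff f S = 0 := by
  intro S hS
  -- Find a block meeting S in two points
  have hex : ∃ j : Fin d, 1 < (S ∩ A j).card := by
    by_contra hctr
    push_neg at hctr
    have hsub : S ⊆ Finset.univ.biUnion (fun j => S ∩ A j) := by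
      intro i hi
      obtain ⟨j, hj⟩ := hcover i
      exact Finset.mem_biUnion.2 ⟨j, Finset.mem_univ j, Finset.mem_inter.2 ⟨hi, hj⟩⟩
    have hcard : S.card ≤ ∑ j : Fin d, (S ∩ A j).card :=
      (Finset.card_le_card hsub).trans Finset.card_biUnion_le
    have hd : S.card ≤ d := hcard.trans (by
      calc ∑ j : Fin d, (S ∩ A j).card ≤ ∑ _j : Fin d, 1 :=
            Finset.sum_le_sum fun j _ => hctr j
        _ = d := by simp)
    omega
  obtain ⟨j, hj⟩ := hex
  obtain ⟨a, ha, b, hb, hab⟩ := Finset.one_lt_card.mp hj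
  have haS : a ∈ S := (Finset.mem_inter.1 ha).1
  have haA : a ∈ A j := (Finset.mem_inter.1 ha).2
  have hbS : b ∈ S := (Finset.mem_inter.1 hb).1
  have hbA : b ∈ A j := (Finset.mem_inter.1 hb).2
  set T : Finset (Fin n) := (S.erase a).erase b with hT
  have hbT : b ∉ T := Finset.notMem_erase _ _
  have haT : a ∉ T := fun h => Finset.notMem_erase a S (Finset.mem_erase.1 h).2
  have hins : insert a (insert b T) = S := by
    rw [hT, Finset.insert_erase (Finset.mem_erase.2 ⟨fun h => hab (h.symm), hbS⟩),
        Finset.insert_erase haS]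
  have hanb : a ∉ insert b T := by
    intro h
    rcases Finset.mem_insert.1 h with h | h
    · exact hab h
    · exact haT h
  -- chi decomposition
  have hchiS : ∀ y : Fin n → Bool, chi S y = bsgn (y a) * bsgn (y b) * chi T y := by
    intro y
    rw [← hins]
    show ∏ i ∈ insert a (insert b T), bsgn (y i) = _
    rw [Finset.prod_insert hanb, Finset.prod_insert hbT, ← mul_assoc]
    rfl
  -- the mixed second derivative of p vanishes
  have hPzero : ∀ x : Fin n → Bool, ∑ ε : Bool, ∑ δ : Bool,
      bsgn ε * bsgn δ * p (Function.update (Function.update x a ε) b δ) = 0 := by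
    intro x
    calc ∑ ε : Bool, ∑ δ : Bool,
          bsgn ε * bsgn δ * p (Function.update (Function.update x a ε) b δ)
        = ∑ ε : Bool, ∑ δ : Bool, ∑ S' : Finset (Fin n), bsgn ε * bsgn δ *
            (fCoeff p S' * chi S' (Function.update (Function.update x a ε) b δ)) := by
          refine Finset.sum_congr rfl fun ε _ => Finset.sum_congr rfl fun δ _ => ?_
          rw [← fourier_inversion p (Function.update (Function.update x a ε) b δ),
              Finset.mul_sum]
      _ = ∑ S' : Finset (Fin n), ∑ ε : Bool, ∑ δ : Bool, bsgn ε * bsgn δ *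
            (fCoeff p S' * chi S' (Function.update (Function.update x a ε) b δ)) := by
          rw [show (∑ ε : Bool, ∑ δ : Bool, ∑ S' : Finset (Fin n), bsgn ε * bsgn δ *
              (fCoeff p S' * chi S' (Function.update (Function.update x a ε) b δ)))
            = ∑ ε : Bool, ∑ S' : Finset (Fin n), ∑ δ : Bool, bsgn ε * bsgn δ *
              (fCoeff p S' * chi S' (Function.update (Function.update x a ε) b δ)) from
            Finset.sum_congr rfl fun ε _ => Finset.sum_comm]
          exact Finset.sum_comm
      _ = 0 := by
          refine Finset.sum_eq_zero fun S' _ => ?_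
          by_cases hc : fCoeff p S' = 0
          · simp [hc]
          · have hcard1 : (S' ∩ A j).card ≤ 1 := hblock S' hc j
            have hnot : a ∉ S' ∨ b ∉ S' := by
              by_contra hh
              push_neg at hh
              have hsub2 : ({a, b} : Finset (Fin n)) ⊆ S' ∩ A j := by
                intro i hi
                rcases Finset.mem_insert.1 hi with rfl | hi
                · exact Finset.mem_inter.2 ⟨hh.1, haA⟩
                · rw [Finset.mem_singleton.1 hi]
                  exact Finset.mem_inter.2 ⟨hh.2, hbA⟩
              have h2 : ({a, b} : Finset (Fin n)).card = 2 := Finset.card_pair hab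
              have hle := Finset.card_le_card hsub2
              omega
            rcases hnot with hna | hnb
            · have hch : ∀ ε δ : Bool,
                  chi S' (Function.update (Function.update x a ε) b δ)
                    = chi S' (Function.update x b δ) := by
                intro ε δ
                rw [Function.update_comm hab, chi_update_notmem hna]
              calc ∑ ε : Bool, ∑ δ : Bool, bsgn ε * bsgn δ *
                    (fCoeff p S' * chi S' (Function.update (Function.update x a ε) b δ))
                  = ∑ ε : Bool, ∑ δ : Bool, bsgn ε * bsgn δ *
                    (fCoeff p S' * chi S' (Function.update x b δ)) := by
                    refine Finset.sum_congr rfl fun ε _ => Finset.sum_congr rfl fun δ _ => ?_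
                    rw [hch]
                _ = 0 := by
                    simp only [Fintype.sum_bool, bsgn, Bool.false_eq_true, if_true, if_false]
                    ring
            · have hch : ∀ ε δ : Bool,
                  chi S' (Function.update (Function.update x a ε) b δ)
                    = chi S' (Function.update x a ε) := by
                intro ε δ
                rw [chi_update_notmem hnb]
              calc ∑ ε : Bool, ∑ δ : Bool, bsgn ε * bsgn δ *
                    (fCoeff p S' * chi S' (Function.update (Function.update x a ε) b δ))
                  = ∑ ε : Bool, ∑ δ : Bool, bsgn ε * bsgn δ *
                    (fCoeff p S' * chi S' (Function.update x a ε)) := by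
                    refine Finset.sum_congr rfl fun ε _ => Finset.sum_congr rfl fun δ _ => ?_
                    rw [hch]
                _ = 0 := by
                    simp only [Fintype.sum_bool, bsgn, Bool.false_eq_true, if_true, if_false]
                    ring
  -- the mixed second derivative of f vanishes
  have hFzero : ∀ x : Fin n → Bool, ∑ ε : Bool, ∑ δ : Bool,
      bsgn ε * bsgn δ * f (Function.update (Function.update x a ε) b δ) = 0 := by
    intro x
    have hP := hPzero x
    simp only [Fintype.sum_bool, bsgn, Bool.false_eq_true, if_true, if_false] at hP ⊢
    set y1 := Function.update (Function.update x a true) b true with hy1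
    set y2 := Function.update (Function.update x a true) b false with hy2
    set y3 := Function.update (Function.update x a false) b true with hy3
    set y4 := Function.update (Function.update x a false) b false with hy4
    have h1 := abs_le.mp (happrox y1)
    have h2 := abs_le.mp (happrox y2)
    have h3 := abs_le.mp (happrox y3)
    have h4 := abs_le.mp (happrox y4)
    rcases hf y1 with e1 | e1 <;> rcases hf y2 with e2 | e2 <;>
      rcases hf y3 with e3 | e3 <;> rcases hf y4 with e4 | e4 <;>
      rw [e1] at h1 <;> rw [e2] at h2 <;> rw [e3] at h3 <;> rw [e4] at h4 <;>
      rw [e1, e2, e3, e4] <;>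
      linarith [h1.1, h1.2, h2.1, h2.2, h3.1, h3.2, h4.1, h4.2]
  -- conclude
  have hinner : ∀ x : Fin n → Bool, ∑ ε : Bool, ∑ δ : Bool,
      f (Function.update (Function.update x a ε) b δ) *
        chi S (Function.update (Function.update x a ε) b δ) = 0 := by
    intro x
    calc ∑ ε : Bool, ∑ δ : Bool,
          f (Function.update (Function.update x a ε) b δ) *
            chi S (Function.update (Function.update x a ε) b δ)
        = ∑ ε : Bool, ∑ δ : Bool,
          (bsgn ε * bsgn δ * f (Function.update (Function.update x a ε) b δ)) * chi T x := by
          refine Finset.sum_congr rfl fun ε _ => Finset.sum_congr rfl fun δ _ => ?_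
          rw [hchiS, Function.update_self, Function.update_of_ne hab, Function.update_self,
              chi_update_notmem hbT, chi_update_notmem haT]
          ring
      _ = (∑ ε : Bool, ∑ δ : Bool,
            bsgn ε * bsgn δ * f (Function.update (Function.update x a ε) b δ)) * chi T x := by
          rw [Finset.sum_mul]
          exact Finset.sum_congr rfl fun ε _ => (Finset.sum_mul _ _ _).symm
      _ = 0 := by rw [hFzero x, zero_mul]
  have h4 := sum_update_bool2 (fun y => f y * chi S y) a b
  have hL : ∑ x : Fin n → Bool, ∑ ε : Bool, ∑ δ : Bool,
      (fun y => f y * chi S y) (Function.update (Function.update x a ε) b δ) = 0 :=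
    Finset.sum_eq_zero fun x _ => hinner x
  rw [hL] at h4
  have hsum : ∑ x : Fin n → Bool, f x * chi S x = 0 := by linarith
  unfold fCoeff
  rw [hsum, zero_div]
end
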